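/- With A, B non-commuting symmetric matrices in GL₂(ℤ) and the sequence y_{-1} = B⁻¹, y_0 = I, y_1 = A, y_k = -y_{k-1}·J·y_{k-3}·J·y_{k-1} for k ≥ 2, one has for all k ≥ 1: y_k = ± y_{k-1}·S·y_{k-2}, where S = AB if k is odd and S = BA if k is even. -/

import Mathlib

open Matrix

def Jmat : Matrix (Fin 2) (Fin 2) ℤ := !![0, 1; -1, 0]

private lemma JmatT : Jmatᵀ = -Jmat := by
  ext i j; fin_cases i <;> fin_cases j <;> simp [Jmat]

private lemma key_pos (M : Matrix (Fin 2) (Fin 2) ℤ) (hM : M.IsSymm) (hd : M.det = 1) :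
    M * Jmat * M * Jmat = -1 := by
  have hs : M 1 0 = M 0 1 := hM.apply 0 1
  have hd' : M 0 0 * M 1 1 - M 0 1 * M 0 1 = 1 := by
    rw [← hs]; rw [show M 0 0 * M 1 1 - M 1 0 * M 1 0 = M.det by rw [Matrix.det_fin_two, hs]]
    exact hd
  ext i j; fin_cases i <;> fin_cases j <;>
    simp only [Jmat, Matrix.mul_apply, Fin.sum_univ_two] <;>
    simp [hs] <;> first | ring1 | linear_combination -hd'

private lemma key_neg (M : Matrix (Fin 2) (Fin 2) ℤ) (hM : M.IsSymm) (hd : M.det = -1) :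
    M * Jmat * M * Jmat = 1 := by
  have hs : M 1 0 = M 0 1 := hM.apply 0 1
  have hd' : M 0 0 * M 1 1 - M 0 1 * M 0 1 = -1 := by
    rw [← hs]; rw [show M 0 0 * M 1 1 - M 1 0 * M 1 0 = M.det by rw [Matrix.det_fin_two, hs]]
    exact hd
  ext i j; fin_cases i <;> fin_cases j <;>
    simp only [Jmat, Matrix.mul_apply, Fin.sum_univ_two] <;>
    simp [hs] <;> first | ring1 | linear_combination -hd'

/-- The sequence `y` here is shifted by one: `y (k+1)` is the paper's `y_k`. -/
theorem alternative_recurrence (A B : Matrix (Fin 2) (Fin 2) ℤ)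
    (hA : A.IsSymm) (hB : B.IsSymm)
    (hdA : IsUnit A.det) (hdB : IsUnit B.det)
    (hAB : A * B ≠ B * A)
    (y : ℕ → Matrix (Fin 2) (Fin 2) ℤ)
    (h0 : y 0 = B⁻¹) (h1 : y 1 = 1) (h2 : y 2 = A)
    (hrec : ∀ k, y (k + 3) = -(y (k + 2) * Jmat * y k * Jmat * y (k + 2))) :
    ∀ k : ℕ, 1 ≤ k →
      y (k + 1) = y k * (if Odd k then A * B else B * A) * y (k - 1) ∨
      y (k + 1) = -(y k * (if Odd k then A * B else B * A) * y (k - 1)) := by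
  have hstep_symm : ∀ M N : Matrix (Fin 2) (Fin 2) ℤ, M.IsSymm → N.IsSymm →
      (-(M * Jmat * N * Jmat * M)).IsSymm := by
    intro M N hM hN
    show _ᵀ = _
    simp only [Matrix.transpose_neg, Matrix.transpose_mul, JmatT, hM.eq, hN.eq]
    simp only [Matrix.neg_mul, Matrix.mul_neg, neg_neg, mul_assoc]
  have L1 : ∀ n : ℕ,
      ((y n).IsSymm ∧ IsUnit (y n).det) ∧
      ((y (n+1)).IsSymm ∧ IsUnit (y (n+1)).det) ∧
      ((y (n+2)).IsSymm ∧ IsUnit (y (n+2)).det) := by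
    intro n
    induction n with
    | zero =>
      refine ⟨⟨?_, ?_⟩, ⟨?_, ?_⟩, ⟨?_, ?_⟩⟩
      · rw [h0]; show _ᵀ = _; rw [Matrix.transpose_nonsing_inv, hB.eq]
      · rw [h0, Matrix.det_nonsing_inv]; exact isUnit_ringInverse.mpr hdB
      · rw [h1]; exact Matrix.isSymm_one
      · rw [h1]; simp
      · rw [h2]; exact hA
      · rw [h2]; exact hdA
    | succ n ih =>
      simp only [show n+1+1 = n+2 from rfl, show n+1+2 = n+3 from rfl]
      refine ⟨ih.2.1, ih.2.2, ?_, ?_⟩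
      · rw [hrec n]; exact hstep_symm _ _ ih.2.2.1 ih.1.1
      · rw [hrec n, Matrix.det_neg]
        have hJ : Jmat.det = 1 := by simp [Jmat, Matrix.det_fin_two]
        simp only [Matrix.det_mul, hJ, mul_one]
        exact (isUnit_one.neg.pow _).mul ((ih.2.2.2.mul ih.1.2).mul ih.2.2.2)
  intro k hk
  obtain ⟨n, rfl⟩ : ∃ n, k = n + 1 := ⟨k - 1, (Nat.succ_pred_eq_of_pos hk).symm⟩
  clear hk
  simp only [Nat.add_sub_cancel]
  induction n with
  | zero =>
    left
    rw [h2, h1, h0, if_pos (by norm_num : Odd (0+1)), one_mul, mul_assoc, Matrix.mul_nonsing_inv B hdB, mul_one]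
  | succ n ih =>
    rw [show n + 1 + 1 = n + 2 from rfl] at ih ⊢
    rw [show n + 2 + 1 = n + 3 from rfl]
    set S : Matrix (Fin 2) (Fin 2) ℤ := if Odd (n+1) then A * B else B * A with hS
    set S' : Matrix (Fin 2) (Fin 2) ℤ := if Odd (n+2) then A * B else B * A with hS'
    have hST : Sᵀ = S' := by
      by_cases h : Odd (n + 1)
      · rw [hS, hS', if_pos h, if_neg (by simp [Nat.odd_add_one, h]),
          Matrix.transpose_mul, hA.eq, hB.eq]
      · rw [hS, hS', if_neg h, if_pos (by simp [Nat.odd_add_one, h]),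
          Matrix.transpose_mul, hA.eq, hB.eq]
    have hsym0 := (L1 n).1.1
    have hsym1 := (L1 n).2.1.1
    have hsym2 := (L1 n).2.2.1
    have hsym3 : (y (n+3)).IsSymm := (L1 (n+1)).2.2.1
    have hJy : y n * Jmat * y n * Jmat = -1 ∨ y n * Jmat * y n * Jmat = 1 := by
      rcases Int.isUnit_iff.mp (L1 n).1.2 with h | h
      · exact Or.inl (key_pos _ hsym0 h)
      · exact Or.inr (key_neg _ hsym0 h)
    have assoc : ∀ X W : Matrix (Fin 2) (Fin 2) ℤ,
        X * y n * Jmat * y n * Jmat * W = X * (y n * Jmat * y n * Jmat) * W := by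
      intro X W; simp only [mul_assoc]
    have main : y (n+3) = y (n+1) * S * y (n+2) ∨ y (n+3) = -(y (n+1) * S * y (n+2)) := by
      have hr := hrec n
      rcases ih with h | h <;> rcases hJy with hj | hj
      · nth_rewrite 1 [h] at hr
        rw [assoc, hj, mul_neg_one, Matrix.neg_mul, neg_neg] at hr
        exact Or.inl hr
      · nth_rewrite 1 [h] at hr
        rw [assoc, hj, mul_one] at hr
        exact Or.inr hr
      · nth_rewrite 1 [h] at hr
        simp only [Matrix.neg_mul, neg_neg] at hr
        rw [assoc, hj, mul_neg_one, Matrix.neg_mul] at hr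
        exact Or.inr hr
      · nth_rewrite 1 [h] at hr
        simp only [Matrix.neg_mul, neg_neg] at hr
        rw [assoc, hj, mul_one] at hr
        exact Or.inl hr
    rcases main with e | e
    · left
      calc y (n+3) = (y (n+3))ᵀ := hsym3.eq.symm
        _ = (y (n+1) * S * y (n+2))ᵀ := by rw [e]
        _ = y (n+2) * Sᵀ * y (n+1) := by
            rw [Matrix.transpose_mul, Matrix.transpose_mul, hsym1.eq, hsym2.eq, mul_assoc]
        _ = y (n+2) * S' * y (n+1) := by rw [hST]
    · right
      calc y (n+3) = (y (n+3))ᵀ := hsym3.eq.symm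
        _ = (-(y (n+1) * S * y (n+2)))ᵀ := by rw [e]
        _ = -(y (n+2) * Sᵀ * y (n+1)) := by
            rw [Matrix.transpose_neg, Matrix.transpose_mul, Matrix.transpose_mul,
              hsym1.eq, hsym2.eq, mul_assoc]
        _ = -(y (n+2) * S' * y (n+1)) := by rw [hST]
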